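/- arXiv:1601.07131 — 2 statements merged into one kernel-verified Lean document; each statement's English description precedes it below -/
import Mathlib

section
/- Let (X,r) be a finite non-degenerate involutive set-theoretic solution of the Yang–Baxter equation whose canonical left brace G(X,r) is left nilpotent (i.e. G^n = 0 for some n, where G^1 = G and G^{n+1} = G * G^n). Then (X,r) is the trivial solution. -/
/-- A left brace: an abelian group `(B,+)` and a group `(B,·)` with the
compatibility law `a·(b+c) + a = a·b + a·c`. -/
class LeftBrace (B : Type*) extends AddCommGroup B, Group B where
  left_compat : ∀ a b c : B, a * (b + c) + a = a * b + a * c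

variable {B : Type*} [LeftBrace B]

/-- The star operation `a * b = a·b - a - b` of a left brace. -/
def bstar (a b : B) : B := a * b - a - b

/-- The map `L_a : b ↦ a·b - a`. -/
def lmap (a b : B) : B := a * b - a

/-- The socle of a left brace. -/
def socle (B : Type*) [LeftBrace B] : Set B := {a : B | ∀ b : B, a * b = a + b}

/-- Iterated star products: `eStar a b m = a*(a*(⋯*(a*b)))` with `a` occurring `m` times. -/
def eStar (a : B) (b : B) : ℕ → B
  | 0 => b
  | k + 1 => bstar a (eStar a b k)

/-- The additive subgroup generated by all `a*c` with `a ∈ A`, `c ∈ C`. -/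
def starSub (A C : AddSubgroup B) : AddSubgroup B :=
  AddSubgroup.closure {x : B | ∃ a ∈ A, ∃ c ∈ C, x = bstar a c}

/-- Rump's left chain: `leftPow B n = B^{n+1}`, i.e. `B^1 = B`, `B^{n+1} = B * B^n`. -/
def leftPow (B : Type*) [LeftBrace B] : ℕ → AddSubgroup B
  | 0 => ⊤
  | n + 1 => starSub ⊤ (leftPow B n)

/-- Rump's right chain: `rightPow B n = B^{(n+1)}`, i.e. `B^{(1)} = B`, `B^{(n+1)} = B^{(n)} * B`. -/
def rightPow (B : Type*) [LeftBrace B] : ℕ → AddSubgroup B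
  | 0 => ⊤
  | n + 1 => starSub (rightPow B n) ⊤

/-- The commutator `[g,h] = g⁻¹h⁻¹gh`. -/
def pcomm {G : Type*} [Group G] (g h : G) : G := g⁻¹ * h⁻¹ * g * h

/-- Iterated commutator `engel g h n = [[…[[g,h],h]…],h]` with `h` occurring `n` times. -/
def engel {G : Type*} [Group G] (g h : G) : ℕ → G
  | 0 => g
  | k + 1 => pcomm (engel g h k) h

/-- A group is Engel if every iterated commutator eventually vanishes. -/
def IsEngelGroup (G : Type*) [Group G] : Prop :=
  ∀ g h : G, ∃ n : ℕ, 0 < n ∧ engel g h n = 1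

def r12 {X : Type*} (r : X × X → X × X) : X × X × X → X × X × X :=
  fun p => ((r (p.1, p.2.1)).1, (r (p.1, p.2.1)).2, p.2.2)

def r23 {X : Type*} (r : X × X → X × X) : X × X × X → X × X × X :=
  fun p => (p.1, r p.2)

/-- A non-degenerate involutive set-theoretic solution of the Yang–Baxter equation. -/
structure YBSolution (X : Type u) where
  r : X × X → X × X
  ybe : r12 r ∘ r23 r ∘ r12 r = r23 r ∘ r12 r ∘ r23 r
  nondegL : ∀ x : X, Function.Bijective fun y => (r (x, y)).1
  nondegR : ∀ y : X, Function.Bijective fun x => (r (x, y)).2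
  involutive : ∀ p : X × X, r (r p) = p

/-- `G`, with its left brace structure and the map `ι : X → G`, is the structure group
`G(X,r)` with its canonical left brace structure: `ι` is injective, `(G,+)` is free
abelian with basis `ι(X)`, `ˣy = L_x(y)` holds, the defining relations hold, and `G`
has the universal property of the group presented by these relations. -/
structure IsCanonicalBrace {X : Type u} (sol : YBSolution X) (G : Type u) [LeftBrace G]
    (ι : X → G) : Prop where
  inj : Function.Injective ι
  basis : ∃ b : Module.Basis X ℤ G, ∀ x : X, b x = ι x
  act : ∀ x y : X, lmap (ι x) (ι y) = ι (sol.r (x, y)).1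
  rel : ∀ x y : X, ι x * ι y = ι (sol.r (x, y)).1 * ι (sol.r (x, y)).2
  univ : ∀ {H : Type u} [Group H] (f : X → H),
    (∀ x y : X, f x * f y = f (sol.r (x, y)).1 * f (sol.r (x, y)).2) →
    ∃! φ : G →* H, ∀ x : X, φ (ι x) = f x


/-!
For `x ∈ X` the map `λ_x : g ↦ x·g - x` of `G(X,r)` is additive and permutes the basis `X` by
`σ_x = r(x, -).1`; hence it has finite order. Left nilpotency makes `λ_x - 1 = (x * -)` nilpotent,
and a unipotent element of finite order in a ring without additive torsion is `1`. So every
`σ_x` is the identity, and involutivity then forces `r(x, y) = (y, x)`.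
-/

instance Module.End.isAddTorsionFree {R M : Type*} [Semiring R] [AddCommMonoid M] [Module R M]
    [IsAddTorsionFree M] : IsAddTorsionFree (Module.End R M) :=
  ⟨fun _ hn _ _ h => LinearMap.ext fun x =>
    IsAddTorsionFree.nsmul_right_injective hn (by simpa using LinearMap.congr_fun h x)⟩

section Unipotent

variable {R : Type*} [Ring R] [IsAddTorsionFree R]

lemma eq_zero_of_isNilpotent_of_mul_natCast_add_mul_eq_zero {t s : R} {k : ℕ} (hk : k ≠ 0)
    (ht : IsNilpotent t) (h : t * (k + t * s) = 0) : t = 0 := by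
  have htk : t * k = -(t * (t * s)) := eq_neg_of_add_eq_zero_left (by rwa [mul_add] at h)
  have step : ∀ m, t ^ (m + 2) = 0 → t ^ (m + 1) = 0 := fun m hm =>
    IsAddTorsionFree.nsmul_right_injective hk <| by
      calc k • t ^ (m + 1) = t ^ m * (t * k) := by rw [nsmul_eq_mul', pow_succ, mul_assoc]
        _ = -(t ^ (m + 2) * s) := by
          rw [htk, pow_add]; noncomm_ring
        _ = k • 0 := by rw [hm, zero_mul, neg_zero, smul_zero]
  obtain ⟨N, hN⟩ := ht
  have descend : ∀ j, t ^ (j + 1) = 0 → t = 0 := fun j => by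
    induction j with
    | zero => simp
    | succ j ih => exact fun hj => ih (step j hj)
  exact descend N (by rw [pow_succ, hN, zero_mul])

lemma eq_one_of_pow_eq_one_of_isNilpotent_sub_one {u : R} {k : ℕ} (hk : k ≠ 0) (hu : u ^ k = 1)
    (hnil : IsNilpotent (u - 1)) : u = 1 := by
  have hgeom : ∑ i ∈ Finset.range k, u ^ i =
      k + (u - 1) * ∑ i ∈ Finset.range k, ∑ j ∈ Finset.range i, u ^ j := by
    rw [Finset.mul_sum]
    simp only [mul_geom_sum, Finset.sum_sub_distrib, Finset.sum_const,
      Finset.card_range, nsmul_eq_mul, mul_one]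
    abel
  have h : (u - 1) * (k + (u - 1) * ∑ i ∈ Finset.range k, ∑ j ∈ Finset.range i, u ^ j) = 0 := by
    rw [← hgeom, mul_geom_sum, hu, sub_self]
  exact sub_eq_zero.mp (eq_zero_of_isNilpotent_of_mul_natCast_add_mul_eq_zero hk hnil h)

end Unipotent

section LeftBrace

lemma lmap_add (a g h : B) : lmap a (g + h) = lmap a g + lmap a h := by
  have h2 : a * (g + h) = a * g + a * h - a := eq_sub_of_add_eq (LeftBrace.left_compat a g h)
  simp only [lmap, h2]
  abel

def lmapEnd (a : B) : Module.End ℤ B :=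
  (AddMonoidHom.mk' (lmap a) (lmap_add a)).toIntLinearMap

@[simp]
lemma lmapEnd_apply (a g : B) : lmapEnd a g = lmap a g := rfl

lemma lmapEnd_sub_one_apply (a g : B) : (lmapEnd a - 1) g = bstar a g := by
  simp only [LinearMap.sub_apply, lmapEnd_apply, Module.End.one_apply, lmap, bstar]

lemma pow_lmapEnd_sub_one_apply_mem_leftPow (a g : B) (m : ℕ) :
    ((lmapEnd a - 1) ^ m) g ∈ leftPow B m := by
  induction m with
  | zero => trivial
  | succ m ih =>
    rw [pow_succ', Module.End.mul_apply, lmapEnd_sub_one_apply]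
    exact AddSubgroup.subset_closure ⟨a, trivial, _, ih, rfl⟩

lemma isNilpotent_lmapEnd_sub_one {n : ℕ} (hn : leftPow B n = ⊥) (a : B) :
    IsNilpotent (lmapEnd a - 1) :=
  ⟨n, LinearMap.ext fun g => by
    simpa [hn] using pow_lmapEnd_sub_one_apply_mem_leftPow a g n⟩

end LeftBrace

namespace YBSolution

variable {X : Type u} (sol : YBSolution X)

noncomputable def leftPerm (x : X) : Equiv.Perm X := Equiv.ofBijective _ (sol.nondegL x)

lemma leftPerm_apply (x y : X) : sol.leftPerm x y = (sol.r (x, y)).1 := rfl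

lemma r_eq_swap_of_forall_fst_eq (h : ∀ x y, (sol.r (x, y)).1 = y) (p : X × X) :
    sol.r p = p.swap := by
  have hsnd : (sol.r (sol.r p)).1 = (sol.r p).2 := h _ _
  rw [sol.involutive] at hsnd
  exact Prod.ext (h _ _) hsnd.symm

end YBSolution

namespace IsCanonicalBrace

variable {X : Type u} {sol : YBSolution X} {G : Type u} [LeftBrace G] {ι : X → G}

lemma isAddTorsionFree (hG : IsCanonicalBrace sol G ι) : IsAddTorsionFree G := by
  obtain ⟨b, -⟩ := hG.basis
  exact b.repr.injective.isAddTorsionFree b.repr.toAddMonoidHom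

lemma pow_lmapEnd_apply (hG : IsCanonicalBrace sol G ι) (x y : X) (k : ℕ) :
    (lmapEnd (ι x) ^ k) (ι y) = ι ((sol.leftPerm x ^ k) y) := by
  induction k with
  | zero => rfl
  | succ k ih =>
    rw [pow_succ', Module.End.mul_apply, ih, lmapEnd_apply, hG.act, pow_succ',
      Equiv.Perm.mul_apply, YBSolution.leftPerm_apply]

lemma lmapEnd_pow_orderOf_leftPerm [Finite X] (hG : IsCanonicalBrace sol G ι) (x : X) :
    lmapEnd (ι x) ^ orderOf (sol.leftPerm x) = 1 := by
  obtain ⟨b, hb⟩ := hG.basis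
  refine b.ext fun y => ?_
  rw [hb, hG.pow_lmapEnd_apply, pow_orderOf_eq_one]
  rfl

lemma fst_r_eq_of_leftPow_eq_bot [Finite X] (hG : IsCanonicalBrace sol G ι) {n : ℕ}
    (hn : leftPow G n = ⊥) (x y : X) : (sol.r (x, y)).1 = y := by
  have := hG.isAddTorsionFree
  have hlmap : lmapEnd (ι x) = 1 := eq_one_of_pow_eq_one_of_isNilpotent_sub_one
    (orderOf_pos _).ne' (hG.lmapEnd_pow_orderOf_leftPerm x) (isNilpotent_lmapEnd_sub_one hn _)
  apply hG.inj
  rw [← hG.act, ← lmapEnd_apply, hlmap, Module.End.one_apply]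

end IsCanonicalBrace

theorem stmt9 {X : Type u} [Finite X] (sol : YBSolution X)
    {G : Type u} [LeftBrace G] (ι : X → G) (hG : IsCanonicalBrace sol G ι)
    (hnil : ∃ n : ℕ, leftPow G n = ⊥) :
    ∀ p : X × X, sol.r p = (p.2, p.1) := by
  obtain ⟨n, hn⟩ := hnil
  exact sol.r_eq_swap_of_forall_fst_eq (hG.fst_r_eq_of_leftPow_eq_bot hn)
end

section
/- Let B be a nonzero left brace and (B,r) its associated solution of the YBE. Then (B,r) has multipermutation level m (a finite number) if and only if B^{(m+1)} = 0 and B^{(m)} ≠ 0, where B^{(1)} = B and B^{(n+1)} = B^{(n)} * B. -/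
variable {B : Type*} [LeftBrace B]

/-- The solution of the YBE associated with a left brace:
`r(a,b) = (L_a(b), L⁻¹_{L_a(b)}(a))`. -/
def braceR (B : Type*) [LeftBrace B] : B × B → B × B :=
  fun p => (lmap p.1 p.2, (lmap p.1 p.2)⁻¹ * (p.1 + lmap p.1 p.2))

/-- `p : X → Y` realizes `solY` as the retraction `Ret(X, solX.r)`: it is surjective,
identifies exactly the points with equal left actions, and intertwines the solutions. -/
def IsRetractionMap {X Y : Type u} (solX : YBSolution X) (solY : YBSolution Y)
    (p : X → Y) : Prop :=
  Function.Surjective p ∧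
  (∀ x x' : X, p x = p x' ↔ ∀ z : X, (solX.r (x, z)).1 = (solX.r (x', z)).1) ∧
  (∀ x z : X, solY.r (p x, p z) = (p (solX.r (x, z)).1, p (solX.r (x, z)).2))

/-- `MplLe sol m` : the `m`-fold retraction of `sol` has cardinality one. -/
inductive MplLe : {X : Type u} → YBSolution X → ℕ → Prop
  | base {X : Type u} (sol : YBSolution X) (x : X) : (∀ y : X, y = x) → MplLe sol 0
  | step {X Y : Type u} (solX : YBSolution X) (solY : YBSolution Y) (p : X → Y) (n : ℕ) :
      IsRetractionMap solX solY p → MplLe solY n → MplLe solX (n + 1)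

/-- `sol` has multipermutation level exactly `m`. -/
def HasMpl {X : Type u} (sol : YBSolution X) (m : ℕ) : Prop :=
  MplLe sol m ∧ ∀ k < m, ¬ MplLe sol k


/-!
Two elements of a left brace act in the same way exactly when they differ by an element of the
socle, so the retraction of the solution of `B` is the solution of the brace `B / Soc(B)`, and
retractions are unique up to isomorphism. On the other side `B^{(k+1)} * B = 0` says that
`B^{(k+1)} ⊆ Soc(B)`, and the image of `B^{(k+1)}` in `B / Soc(B)` is `(B / Soc(B))^{(k+1)}`.
Hence `B^{(k+2)} = 0` iff `(B / Soc(B))^{(k+1)} = 0`, and induction on `k` shows that the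
`k`-fold retraction is a single point iff `B^{(k+1)} = 0`. Minimality of `m` then follows since
the chain `B^{(n)}` is decreasing.
-/

universe u

theorem Antitone.forall_lt_ne_bot_iff {α : Type*} [PartialOrder α] [OrderBot α] {f : ℕ → α}
    (hf : Antitone f) (h0 : f 0 ≠ ⊥) (m : ℕ) :
    (∀ k < m, f k ≠ ⊥) ↔ f (m - 1) ≠ ⊥ := by
  refine ⟨fun h => ?_, fun h k hk => ne_bot_of_le_ne_bot h (hf (by omega))⟩
  rcases m with _ | m
  · exact h0
  · exact h m m.lt_succ_self

section Retraction

variable {X Y Z W : Type u}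

def IsSolutionHom (solX : YBSolution X) (solY : YBSolution Y) (f : X → Y) : Prop :=
  ∀ x z, solY.r (f x, f z) = (f (solX.r (x, z)).1, f (solX.r (x, z)).2)

theorem IsRetractionMap.comp_bijective {solY : YBSolution Y} {solZ : YBSolution Z}
    {solW : YBSolution W} {p : Y → W} {f : Z → Y} (hp : IsRetractionMap solY solW p)
    (hf : Function.Bijective f) (hfs : IsSolutionHom solZ solY f) :
    IsRetractionMap solZ solW (p ∘ f) := by
  obtain ⟨hsurj, hker, hhom⟩ := hp
  refine ⟨hsurj.comp hf.2, fun z z' => ?_, fun z t => ?_⟩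
  · rw [Function.comp_apply, Function.comp_apply, hker, hf.2.forall]
    simp only [hfs z, hfs z', hf.1.eq_iff]
  · simp only [Function.comp_apply, hhom, hfs z t]

theorem MplLe.of_bijective {solY : YBSolution Y} {solZ : YBSolution Z} {f : Z → Y} {n : ℕ}
    (h : MplLe solY n) (hf : Function.Bijective f) (hfs : IsSolutionHom solZ solY f) :
    MplLe solZ n := by
  cases h with
  | base _ y hy =>
    obtain ⟨z₀, -⟩ := hf.2 y
    exact MplLe.base solZ z₀ fun z => hf.1 ((hy (f z)).trans (hy (f z₀)).symm)
  | step _ solW p n hp hW => exact MplLe.step solZ solW (p ∘ f) n (hp.comp_bijective hf hfs) hW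

theorem IsRetractionMap.exists_bijective {solX : YBSolution X} {solY : YBSolution Y}
    {solZ : YBSolution Z} {p : X → Y} {q : X → Z} (hp : IsRetractionMap solX solY p)
    (hq : IsRetractionMap solX solZ q) :
    ∃ f : Z → Y, Function.Bijective f ∧ IsSolutionHom solZ solY f := by
  obtain ⟨hps, hpk, hph⟩ := hp
  obtain ⟨hqs, hqk, hqh⟩ := hq
  have hpq : ∀ x x', q x = q x' ↔ p x = p x' := fun x x' => (hqk x x').trans (hpk x x').symm
  obtain ⟨f, hf⟩ : ∃ f : Z → Y, ∀ x, f (q x) = p x :=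
    ⟨p ∘ Function.surjInv hqs, fun x => (hpq _ _).1 (Function.surjInv_eq hqs (q x))⟩
  refine ⟨f, ⟨hqs.forall₂.2 fun x x' => ?_, ?_⟩, hqs.forall₂.2 fun x w => ?_⟩
  · rw [hf, hf, ← hpq]
    exact id
  · exact hps.forall.2 fun x => ⟨q x, hf x⟩
  · simp only [hqh, hf, hph]

theorem IsRetractionMap.mplLe_succ_iff {solX : YBSolution X} {solY : YBSolution Y} {p : X → Y}
    (hp : IsRetractionMap solX solY p) {n : ℕ} : MplLe solX (n + 1) ↔ MplLe solY n := by
  refine ⟨fun h => ?_, MplLe.step solX solY p n hp⟩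
  cases h with
  | step _ solZ q _ hq hZ =>
    obtain ⟨f, hf, hfs⟩ := hq.exists_bijective hp
    exact hZ.of_bijective hf hfs

theorem mplLe_zero_iff {sol : YBSolution X} : MplLe sol 0 ↔ ∃ x : X, ∀ y, y = x := by
  refine ⟨fun h => ?_, fun ⟨x, hx⟩ => MplLe.base sol x hx⟩
  cases h with
  | base _ x hx => exact ⟨x, hx⟩

end Retraction

namespace LeftBrace

theorem one_eq_zero : (1 : B) = 0 := by
  simpa using left_compat (1 : B) 0 0

theorem mul_eq_add_lmap (a b : B) : a * b = a + lmap a b := by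
  rw [lmap, add_sub_cancel]

theorem lmap_add (a b c : B) : lmap a (b + c) = lmap a b + lmap a c := by
  simp only [lmap]
  rw [eq_sub_of_add_eq (left_compat a b c)]
  abel

theorem lmap_sub (a b c : B) : lmap a (b - c) = lmap a b - lmap a c :=
  eq_sub_of_add_eq (by rw [← lmap_add, sub_add_cancel])

theorem lmap_mul (a b c : B) : lmap (a * b) c = lmap a (lmap b c) := by
  rw [show lmap b c = b * c - b from rfl, lmap_sub]
  simp only [lmap, mul_assoc]
  abel

theorem lmap_one (b : B) : lmap 1 b = b := by
  rw [lmap, one_mul, one_eq_zero, sub_zero]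

theorem lmap_inv_lmap (a b : B) : lmap a⁻¹ (lmap a b) = b := by
  rw [← lmap_mul, inv_mul_cancel, lmap_one]

theorem lmap_lmap_inv (a b : B) : lmap a (lmap a⁻¹ b) = b := by
  rw [← lmap_mul, mul_inv_cancel, lmap_one]

theorem lmap_bijective (a : B) : Function.Bijective (lmap a) :=
  Function.bijective_iff_has_inverse.2 ⟨lmap a⁻¹, lmap_inv_lmap a, lmap_lmap_inv a⟩

theorem lmap_inv_eq_of_lmap_eq {x y : B} (h : lmap x = lmap y) : lmap x⁻¹ = lmap y⁻¹ := by
  funext z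
  calc lmap x⁻¹ z = lmap y⁻¹ (lmap y (lmap x⁻¹ z)) := (lmap_inv_lmap y _).symm
    _ = lmap y⁻¹ z := by rw [← h, lmap_lmap_inv]

theorem inv_mul_lmap (a b : B) : a⁻¹ * lmap a b = a⁻¹ + b := by
  rw [mul_eq_add_lmap, show lmap a b = a * b - a from rfl, lmap_sub]
  simp only [lmap, inv_mul_cancel_left, inv_mul_cancel, one_eq_zero]
  abel

def rmap (b a : B) : B := (lmap a b)⁻¹ * (a * b)

theorem braceR_apply (a b : B) : braceR B (a, b) = (lmap a b, rmap b a) := by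
  simp only [braceR, rmap, ← mul_eq_add_lmap]

theorem lmap_mul_rmap (a b : B) : lmap a b * rmap b a = a * b :=
  mul_inv_cancel_left _ _

theorem lmap_mul_rmap_mul (a b c : B) : lmap a b * (rmap b a * c) = a * (b * c) := by
  rw [← mul_assoc, lmap_mul_rmap, mul_assoc]

theorem lmap_lmap_rmap (a b : B) : lmap (lmap a b) (rmap b a) = a := by
  rw [lmap, lmap_mul_rmap, lmap, sub_sub_cancel]

theorem rmap_rmap_lmap (a b : B) : rmap (rmap b a) (lmap a b) = b := by
  rw [rmap, lmap_lmap_rmap, lmap_mul_rmap, inv_mul_cancel_left]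

theorem rmap_eq (b a : B) : rmap b a = (a⁻¹ + b)⁻¹ * b := by
  rw [rmap, ← inv_mul_lmap, mul_inv_rev, inv_inv, mul_assoc]

theorem rmap_bijective (b : B) : Function.Bijective (rmap b) := by
  rw [show rmap b = (· * b) ∘ (·⁻¹) ∘ (· + b) ∘ (·⁻¹) from funext (rmap_eq b)]
  exact (Equiv.mulRight b).bijective.comp <| (Equiv.inv B).bijective.comp <|
    (Equiv.addRight b).bijective.comp (Equiv.inv B).bijective

theorem triple_ext_of_lmap {x₁ x₂ x₃ y₁ y₂ y₃ : B} (h₁ : x₁ = y₁)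
    (h₂ : lmap x₁ x₂ = lmap y₁ y₂) (h₃ : x₁ * x₂ * x₃ = y₁ * y₂ * y₃) :
    (x₁, x₂, x₃) = (y₁, y₂, y₃) := by
  subst h₁
  obtain rfl := (lmap_bijective x₁).injective h₂
  rw [mul_left_cancel h₃]

def braceSol (B : Type*) [LeftBrace B] : YBSolution B where
  r := braceR B
  ybe := by
    funext ⟨a, b, c⟩
    simp only [Function.comp_apply, r12, r23, braceR_apply]
    -- `r` preserves products and `λ_{r(a,b)₁} (r(a,b)₂) = a`; these pin down the triple.
    refine triple_ext_of_lmap ?_ ?_ ?_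
    · rw [← lmap_mul, lmap_mul_rmap, lmap_mul]
    · rw [lmap_lmap_rmap, ← lmap_mul, lmap_mul_rmap, lmap_mul, lmap_lmap_rmap]
    · simp only [mul_assoc, lmap_mul_rmap, lmap_mul_rmap_mul]
  nondegL a := by simpa only [braceR_apply] using lmap_bijective a
  nondegR b := by simpa only [braceR_apply] using rmap_bijective b
  involutive := by
    rintro ⟨a, b⟩
    rw [braceR_apply, braceR_apply, lmap_lmap_rmap, rmap_rmap_lmap]

@[simp]
theorem braceSol_r : (braceSol B).r = braceR B := rfl

theorem mem_socle_iff {a : B} : a ∈ socle B ↔ ∀ b, lmap a b = b := by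
  simp only [socle, Set.mem_ofPred_eq, mul_eq_add_lmap, add_right_inj]

def socleSubgroup (B : Type*) [LeftBrace B] : AddSubgroup B where
  carrier := socle B
  zero_mem' := mem_socle_iff.2 fun b => by rw [← one_eq_zero, lmap_one]
  add_mem' {a b} ha hb := by
    rw [← ha b]
    exact mem_socle_iff.2 fun c => by rw [lmap_mul, mem_socle_iff.1 hb, mem_socle_iff.1 ha]
  neg_mem' {a} ha := by
    have hinv : -a = a⁻¹ :=
      neg_eq_of_add_eq_zero_right (by rw [← ha, mul_inv_cancel, one_eq_zero])
    rw [hinv]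
    exact mem_socle_iff.2 fun b => by simpa only [mem_socle_iff.1 ha] using lmap_inv_lmap a b

theorem mem_socleSubgroup_iff {a : B} : a ∈ socleSubgroup B ↔ ∀ b, lmap a b = b :=
  mem_socle_iff

theorem mul_eq_add_of_mem_socleSubgroup {a : B} (ha : a ∈ socleSubgroup B) (b : B) :
    a * b = a + b :=
  ha b

theorem neg_add_mem_socleSubgroup_iff {x y : B} :
    -x + y ∈ socleSubgroup B ↔ lmap x = lmap y := by
  constructor
  · intro hs
    have hy : (-x + y) * x = y := by
      rw [mul_eq_add_of_mem_socleSubgroup hs]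
      abel
    funext z
    rw [← hy, lmap_mul, mem_socleSubgroup_iff.1 hs]
  · intro h
    have hs : y * x⁻¹ ∈ socleSubgroup B :=
      mem_socleSubgroup_iff.2 fun b => by rw [lmap_mul, ← h, lmap_lmap_inv]
    have hy : -x + y = y * x⁻¹ := by
      rw [neg_add_eq_iff_eq_add, add_comm, ← mul_eq_add_of_mem_socleSubgroup hs,
        inv_mul_cancel_right]
    rwa [hy]

abbrev SocleQuotient (B : Type*) [LeftBrace B] := B ⧸ socleSubgroup B

theorem mk_eq_mk_iff {x y : B} : (x : SocleQuotient B) = y ↔ lmap x = lmap y :=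
  QuotientAddGroup.eq.trans neg_add_mem_socleSubgroup_iff

instance : Mul (SocleQuotient B) where
  mul := Quotient.map₂ (· * ·) fun x x' hx y y' hy => by
    have hx' : lmap x = lmap x' := mk_eq_mk_iff.1 (Quotient.sound hx)
    have hy' : lmap y = lmap y' := mk_eq_mk_iff.1 (Quotient.sound hy)
    refine Quotient.exact (mk_eq_mk_iff.2 (funext fun z => ?_))
    rw [lmap_mul, lmap_mul, hx', hy']

instance : Inv (SocleQuotient B) where
  inv := Quotient.map (·⁻¹) fun _ _ hx =>
    Quotient.exact (mk_eq_mk_iff.2 (lmap_inv_eq_of_lmap_eq (mk_eq_mk_iff.1 (Quotient.sound hx))))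

theorem mk_mul (x y : B) : ((x * y : B) : SocleQuotient B) = x * y := rfl

theorem mk_inv (x : B) : ((x⁻¹ : B) : SocleQuotient B) = (x : SocleQuotient B)⁻¹ := rfl

instance : Group (SocleQuotient B) where
  one := ((1 : B) : SocleQuotient B)
  mul_assoc a b c := Quotient.inductionOn₃ a b c fun a b c =>
    congrArg QuotientAddGroup.mk (mul_assoc a b c)
  one_mul a := Quotient.inductionOn a fun a => congrArg QuotientAddGroup.mk (one_mul a)
  mul_one a := Quotient.inductionOn a fun a => congrArg QuotientAddGroup.mk (mul_one a)
  inv_mul_cancel a := Quotient.inductionOn a fun a =>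
    congrArg QuotientAddGroup.mk (inv_mul_cancel a)

instance : LeftBrace (SocleQuotient B) where
  left_compat a b c := Quotient.inductionOn₃ a b c fun a b c =>
    congrArg QuotientAddGroup.mk (left_compat a b c)

theorem mk_lmap (x y : B) :
    ((lmap x y : B) : SocleQuotient B) = lmap (x : SocleQuotient B) y := by
  simp only [lmap, QuotientAddGroup.mk_sub, mk_mul]

theorem mk_rmap (x y : B) :
    ((rmap x y : B) : SocleQuotient B) = rmap (x : SocleQuotient B) y := by
  simp only [rmap, mk_mul, mk_inv, mk_lmap]

theorem mk_bstar (x y : B) :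
    ((bstar x y : B) : SocleQuotient B) = bstar (x : SocleQuotient B) y := by
  simp only [bstar, QuotientAddGroup.mk_sub, mk_mul]

theorem isRetractionMap_mk :
    IsRetractionMap (braceSol B) (braceSol (SocleQuotient B)) QuotientAddGroup.mk := by
  refine ⟨QuotientAddGroup.mk_surjective, fun x x' => ?_, fun x z => ?_⟩
  · simp only [braceSol_r, braceR_apply]
    exact mk_eq_mk_iff.trans funext_iff
  · simp only [braceSol_r, braceR_apply, mk_lmap, mk_rmap]

theorem bstar_eq_zero_iff {a c : B} : bstar a c = 0 ↔ lmap a c = c :=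
  sub_eq_zero

theorem starSub_top_eq_bot_iff {A : AddSubgroup B} :
    starSub A ⊤ = ⊥ ↔ A ≤ socleSubgroup B := by
  rw [starSub, AddSubgroup.closure_eq_bot_iff]
  constructor
  · intro h a ha
    exact mem_socleSubgroup_iff.2 fun c =>
      bstar_eq_zero_iff.1 (h ⟨a, ha, c, AddSubgroup.mem_top c, rfl⟩)
  · rintro h _ ⟨a, ha, c, -, rfl⟩
    exact bstar_eq_zero_iff.2 (mem_socleSubgroup_iff.1 (h ha) c)

theorem starSub_mono_left {A A' : AddSubgroup B} (h : A ≤ A') (D : AddSubgroup B) :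
    starSub A D ≤ starSub A' D :=
  AddSubgroup.closure_mono fun _ ⟨a, ha, d, hd, hx⟩ => ⟨a, h ha, d, hd, hx⟩

theorem map_starSub {C : Type*} [LeftBrace C] (f : B →+ C)
    (hf : ∀ a b, f (bstar a b) = bstar (f a) (f b)) (A D : AddSubgroup B) :
    (starSub A D).map f = starSub (A.map f) (D.map f) := by
  rw [starSub, starSub, AddMonoidHom.map_closure]
  congr 1
  ext y
  constructor
  · rintro ⟨_, ⟨a, ha, d, hd, rfl⟩, rfl⟩
    exact ⟨f a, ⟨a, ha, rfl⟩, f d, ⟨d, hd, rfl⟩, hf a d⟩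
  · rintro ⟨_, ⟨a, ha, rfl⟩, _, ⟨d, hd, rfl⟩, rfl⟩
    exact ⟨bstar a d, ⟨a, ha, d, hd, rfl⟩, hf a d⟩

theorem antitone_rightPow : Antitone (rightPow B) := by
  refine antitone_nat_of_succ_le fun n => ?_
  induction n with
  | zero => exact le_top
  | succ n ih => exact starSub_mono_left ih ⊤

theorem map_rightPow {C : Type*} [LeftBrace C] (f : B →+ C) (hsurj : Function.Surjective f)
    (hf : ∀ a b, f (bstar a b) = bstar (f a) (f b)) (k : ℕ) :
    (rightPow B k).map f = rightPow C k := by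
  induction k with
  | zero => exact AddSubgroup.map_top_of_surjective f hsurj
  | succ k ih =>
    rw [rightPow, rightPow, map_starSub f hf, ih, AddSubgroup.map_top_of_surjective f hsurj]

theorem rightPow_succ_eq_bot_iff (k : ℕ) :
    rightPow B (k + 1) = ⊥ ↔ rightPow (SocleQuotient B) k = ⊥ := by
  rw [← map_rightPow (QuotientAddGroup.mk' (socleSubgroup B))
      (QuotientAddGroup.mk'_surjective _) mk_bstar,
    AddSubgroup.map_eq_bot_iff, QuotientAddGroup.ker_mk']
  exact starSub_top_eq_bot_iff

theorem mplLe_braceSol_iff (k : ℕ) : MplLe (braceSol B) k ↔ rightPow B k = ⊥ := by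
  induction k generalizing B with
  | zero =>
    rw [mplLe_zero_iff, rightPow, AddSubgroup.eq_bot_iff_forall]
    simp only [AddSubgroup.mem_top, forall_const]
    exact ⟨fun ⟨x, hx⟩ y => (hx y).trans (hx 0).symm, fun h => ⟨0, h⟩⟩
  | succ k ih => rw [isRetractionMap_mk.mplLe_succ_iff, ih, rightPow_succ_eq_bot_iff]

end LeftBrace

theorem stmt12 {B : Type u} [LeftBrace B] (hB : ∃ b : B, b ≠ 0)
    (sol : YBSolution B) (hsol : sol.r = braceR B) (m : ℕ) :
    HasMpl sol m ↔ (rightPow B m = ⊥ ∧ rightPow B (m - 1) ≠ ⊥) := by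
  obtain rfl : sol = LeftBrace.braceSol B := by
    cases sol
    subst hsol
    rfl
  obtain ⟨b, hb⟩ := hB
  have : Nontrivial B := ⟨⟨b, 0, hb⟩⟩
  simp only [HasMpl, LeftBrace.mplLe_braceSol_iff]
  rw [LeftBrace.antitone_rightPow.forall_lt_ne_bot_iff top_ne_bot]
end
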